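/- Let N be a 3-dimensional nonunital commutative associative ℂ-algebra such that every product of three elements of N is zero, the subspace N² = span_ℂ{x·y : x, y ∈ N} is 1-dimensional, and the annihilator {x ∈ N : x·y = 0 for all y ∈ N} is 2-dimensional (i.e. the induced quadratic form on N/N² with values in N² has rank 1). Then N is isomorphic to the model algebra III_{2,3}, i.e. the 3-dimensional nonunital ℂ-algebra with basis u, v, w and products v·v = w and all other products of basis vectors zero. -/

import Mathlib

/-!
A nonzero square `v * v` exists because squares span `N²` by polarization. Since triple products
vanish, `w := v * v` lies in the annihilator, which is 2-dimensional, so it contains some `u`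
independent of `w`; as `v` is not in the annihilator, `u, v, w` is a basis of `N`. In this basis
`u` and `w` multiply everything to zero and `v * v = w`, which is the multiplication table of
`III_{2,3}`.
-/

/-- The multiplication of the model algebra `III_{2,3} = 𝔪_{x,y}/(xy, x², y³)` with
basis `u, v, w`: `v·v = w`, all other products of basis vectors zero. -/
def mulIII23 (p q : Fin 3 → ℂ) : Fin 3 → ℂ :=
  ![0, 0, p 1 * q 1]

/-- The annihilator `{x ∈ N : x·y = 0 for all y ∈ N}` of a nonunital commutative
`ℂ`-algebra, as a `ℂ`-submodule. -/
def annihilatorSubmodule (N : Type*) [NonUnitalCommRing N] [Module ℂ N]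
    [IsScalarTower ℂ N N] : Submodule ℂ N where
  carrier := {x : N | ∀ y : N, x * y = 0}
  zero_mem' := by intro y; simp
  add_mem' := by
    intro a b ha hb y
    rw [add_mul, ha y, hb y, add_zero]
  smul_mem' := by
    intro c a ha y
    rw [smul_mul_assoc, ha y, smul_zero]

open Module Submodule

theorem mul_eq_zero_of_forall_mul_self_eq_zero (K : Type*) {N : Type*} [DivisionRing K]
    [NeZero (2 : K)] [NonUnitalCommRing N] [Module K N] (h : ∀ v : N, v * v = 0) (x y : N) :
    x * y = 0 := by
  have h2 : (2 : K) • (x * y) = 0 := by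
    have hxy := h (x + y)
    rwa [add_mul, mul_add, mul_add, h x, h y, mul_comm y x, zero_add, add_zero,
      ← two_smul K] at hxy
  exact (smul_eq_zero.1 h2).resolve_left two_ne_zero

theorem exists_mul_self_ne_zero {K N : Type*} [DivisionRing K] [NeZero (2 : K)]
    [NonUnitalCommRing N] [Module K N]
    (h : span K {z : N | ∃ x y : N, z = x * y} ≠ ⊥) : ∃ v : N, v * v ≠ 0 := by
  contrapose! h
  refine span_eq_bot.2 ?_
  rintro _ ⟨x, y, rfl⟩
  exact mul_eq_zero_of_forall_mul_self_eq_zero K h x y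

theorem linearIndependent_three_of_mem_of_notMem {K V : Type*} [DivisionRing K]
    [AddCommGroup V] [Module K V] {A : Submodule K V} {u v w : V} (hu : u ∈ A) (hw : w ∈ A)
    (hv : v ∉ A) (hw₀ : w ≠ 0) (huw : u ∉ K ∙ w) : LinearIndependent K ![u, v, w] := by
  have hvuw : LinearIndependent K ![v, u, w] := by
    refine linearIndependent_finCons.2 ⟨?_, fun hv' => hv ?_⟩
    · exact linearIndependent_fin2.2 ⟨hw₀, fun a h => huw (mem_span_singleton.2 ⟨a, h⟩)⟩
    · refine span_le.2 ?_ hv'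
      rintro _ ⟨i, rfl⟩
      fin_cases i
      exacts [hu, hw]
  convert (linearIndependent_equiv (Equiv.swap (0 : Fin 3) 1)).2 hvuw using 1
  ext i
  fin_cases i <;> rfl

section Basis

variable {N : Type*} [NonUnitalCommRing N] [Module ℂ N] [SMulCommClass ℂ N N]
  [IsScalarTower ℂ N N] (b : Basis (Fin 3) ℂ N)

theorem Module.Basis.mul_eq_coord_mul_coord_smul (h₀ : ∀ z, b 0 * z = 0)
    (h₂ : ∀ z, b 2 * z = 0) (h₁₁ : b 1 * b 1 = b 2) (x y : N) :
    x * y = (b.equivFun x 1 * b.equivFun y 1) • b 2 := by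
  have h₁₀ : b 1 * b 0 = 0 := by rw [mul_comm, h₀]
  have h₁₂ : b 1 * b 2 = 0 := by rw [mul_comm, h₂]
  conv_lhs => rw [← b.sum_equivFun x, ← b.sum_equivFun y]
  simp only [Fin.sum_univ_three, add_mul, mul_add, smul_mul_assoc, mul_smul_comm, h₀, h₂, h₁₀,
    h₁₂, h₁₁, smul_zero, zero_add, add_zero, smul_smul]
  rw [mul_comm]

theorem Module.Basis.equivFun_mul_eq_mulIII23 (h₀ : ∀ z, b 0 * z = 0) (h₂ : ∀ z, b 2 * z = 0)
    (h₁₁ : b 1 * b 1 = b 2) (x y : N) :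
    b.equivFun (x * y) = mulIII23 (b.equivFun x) (b.equivFun y) := by
  rw [b.mul_eq_coord_mul_coord_smul h₀ h₂ h₁₁, map_smul]
  ext j
  fin_cases j <;> simp [mulIII23]

end Basis

theorem iso_III23_of_rank_one_general
    (N : Type*) [NonUnitalCommRing N] [Module ℂ N]
    [SMulCommClass ℂ N N] [IsScalarTower ℂ N N]
    (hdim : Module.finrank ℂ N = 3)
    (htriple : ∀ x y z : N, x * y * z = 0)
    (hsq : Module.finrank ℂ
      ↥(Submodule.span ℂ {z : N | ∃ x y : N, z = x * y}) = 1)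
    (hann : Module.finrank ℂ ↥(annihilatorSubmodule N) = 2) :
    ∃ e : N ≃ₗ[ℂ] (Fin 3 → ℂ),
      ∀ x y : N, e (x * y) = mulIII23 (e x) (e y) := by
  obtain ⟨v, hv⟩ := exists_mul_self_ne_zero (K := ℂ) fun h => by
    rw [h, finrank_bot] at hsq
    exact zero_ne_one hsq
  have hw : v * v ∈ annihilatorSubmodule N := htriple v v
  have hv_notMem : v ∉ annihilatorSubmodule N := fun h => hv (h v)
  have hlt : (ℂ ∙ (v * v)) < annihilatorSubmodule N :=
    lt_of_le_of_finrank_lt_finrank (span_singleton_le_iff_mem _ _ |>.2 hw)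
      (by rw [finrank_span_singleton hv, hann]; norm_num)
  obtain ⟨u, hu, huw⟩ := SetLike.exists_of_lt hlt
  have hli := linearIndependent_three_of_mem_of_notMem hu hw hv_notMem hv huw
  let b := basisOfLinearIndependentOfCardEqFinrank hli (by simp [hdim])
  have hb : ⇑b = ![u, v, v * v] := coe_basisOfLinearIndependentOfCardEqFinrank hli _
  refine ⟨b.equivFun, b.equivFun_mul_eq_mulIII23 ?_ ?_ ?_⟩ <;> simp only [hb]
  exacts [hu, hw, rfl]

/-- A 3-dimensional nonunital commutative associative `ℂ`-algebra with vanishing triple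
products, 1-dimensional square `N²`, and 2-dimensional annihilator (induced quadratic
form of rank 1) is isomorphic to the model algebra `III_{2,3}`. -/
theorem iso_III23_of_rank_one
    (N : Type*) [NonUnitalCommRing N] [Module ℂ N]
    [SMulCommClass ℂ N N] [IsScalarTower ℂ N N] [Module.Finite ℂ N]
    (hdim : Module.finrank ℂ N = 3)
    (htriple : ∀ x y z : N, x * y * z = 0)
    (hsq : Module.finrank ℂ
      ↥(Submodule.span ℂ {z : N | ∃ x y : N, z = x * y}) = 1)
    (hann : Module.finrank ℂ ↥(annihilatorSubmodule N) = 2) :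
    ∃ e : N ≃ₗ[ℂ] (Fin 3 → ℂ),
      ∀ x y : N, e (x * y) = mulIII23 (e x) (e y) :=
  iso_III23_of_rank_one_general N hdim htriple hsq hann
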